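/- arXiv:2503.01104 — 5 statements merged into one kernel-verified Lean document; each statement's English description precedes it below -/
import Mathlib

section
/- Let p, q be coprime positive integers with q ≥ 2, and let α be real. The x- and y-components of the electric field at (0,0,α) from the uniformly charged (p,q)-torus knot vanish; equivalently, the integral from 0 to 2π of [(cos(qφ)+2) e^{ipφ} √(q^2 + p^2(2+cos(qφ))^2)] / (α^2 + 2α sin(qφ) + 5 + 4cos(qφ))^{3/2} dφ equals 0. -/
/-!
Writing `ω = exp (2πi / q)`, the integrand is `F (q φ) e^{i p φ}` with `F` a `2π`-periodic function,
so it is `2π`-periodic and shifting `φ` by `2π / q` multiplies it by `ω ^ p`. Integrating over a full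
period, the integral `J` satisfies `J = ω ^ p J`, and `ω ^ p ≠ 1` because `q ∤ p`.
-/

open Real Complex

theorem Function.Periodic.intervalIntegral_eq_zero_of_add_eq_smul {E : Type*}
    [NormedAddCommGroup E] [NormedSpace ℂ E] {f : ℝ → E} {T a : ℝ} {c : ℂ}
    (hf : Function.Periodic f T) (hfa : ∀ x, f (x + a) = c • f x) (hc : c ≠ 1) :
    ∫ x in (0 : ℝ)..T, f x = 0 := by
  have hJ : ∫ x in (0 : ℝ)..T, f x = c • ∫ x in (0 : ℝ)..T, f x := calc
    ∫ x in (0 : ℝ)..T, f x = ∫ x in a..a + T, f x := by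
      simpa using hf.intervalIntegral_add_eq 0 a
    _ = ∫ x in (0 : ℝ)..T, f (x + a) := by
      rw [intervalIntegral.integral_comp_add_right, zero_add, add_comm]
    _ = c • ∫ x in (0 : ℝ)..T, f x := by
      simp only [hfa, intervalIntegral.integral_smul]
  have h : (1 - c) • ∫ x in (0 : ℝ)..T, f x = 0 := by
    rw [sub_smul, one_smul, ← hJ, sub_self]
  exact (smul_eq_zero.mp h).resolve_left (sub_ne_zero.mpr hc.symm)

theorem intervalIntegral_comp_mul_mul_exp_eq_zero {F : ℝ → ℂ} (hF : Function.Periodic F (2 * π))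
    {p : ℤ} {q : ℕ} (hq : q ≠ 0) (hqp : ¬ (q : ℤ) ∣ p) :
    ∫ φ in (0 : ℝ)..2 * π, F (q * φ) * exp (p * I * φ) = 0 := by
  have hω := isPrimitiveRoot_exp q hq
  refine Function.Periodic.intervalIntegral_eq_zero_of_add_eq_smul (a := 2 * π / q)
    (c := exp (2 * π * I / q) ^ p) ?_ ?_ ((hω.zpow_eq_one_iff_dvd p).not.mpr hqp)
  · intro x
    have hexp : exp (p * I * ↑(x + 2 * π)) = exp (p * I * x) := by
      rw [show (p * I * ↑(x + 2 * π) : ℂ) = p * I * x + p * (2 * π * I) by push_cast; ring,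
        Complex.exp_add, exp_int_mul_two_pi_mul_I, mul_one]
    dsimp only
    rw [mul_add, hexp, hF.nat_mul q]
  · intro x
    have hq' : (q : ℝ) ≠ 0 := Nat.cast_ne_zero.mpr hq
    have hF' : F (q * (x + 2 * π / q)) = F (q * x) := by
      rw [show (q : ℝ) * (x + 2 * π / q) = q * x + 2 * π by field_simp, hF]
    have hexp : exp (p * I * ↑(x + 2 * π / q)) = exp (2 * π * I / q) ^ p * exp (p * I * x) := by
      rw [← exp_int_mul, ← Complex.exp_add]
      congr 1
      push_cast
      ring
    rw [hF', hexp, smul_eq_mul]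
    ring

open Complex in
theorem torus_knot_field_xy_vanish_general (p q : ℕ) (hq : 2 ≤ q)
    (hpq : Nat.Coprime p q) (α : ℝ) :
    ∫ φ in (0:ℝ)..(2 * Real.pi),
      ((Real.cos (q * φ) + 2 : ℝ) : ℂ) * Complex.exp ((p : ℂ) * Complex.I * (φ : ℂ)) *
        ((Real.sqrt ((q : ℝ) ^ 2 + (p : ℝ) ^ 2 * (2 + Real.cos (q * φ)) ^ 2) : ℝ) : ℂ) /
        (((α ^ 2 + 2 * α * Real.sin (q * φ) + 5 + 4 * Real.cos (q * φ)) ^ ((3:ℝ)/2) : ℝ) : ℂ)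
      = 0 := by
  set F : ℝ → ℂ := fun θ =>
    ((Real.cos θ + 2 : ℝ) : ℂ) * ((Real.sqrt ((q : ℝ) ^ 2 + (p : ℝ) ^ 2 * (2 + Real.cos θ) ^ 2) : ℝ) : ℂ) /
      (((α ^ 2 + 2 * α * Real.sin θ + 5 + 4 * Real.cos θ) ^ ((3:ℝ)/2) : ℝ) : ℂ)
  have hF : Function.Periodic F (2 * π) := fun θ => by
    simp only [F, Real.cos_add_two_pi, Real.sin_add_two_pi]
  have hqp : ¬ (q : ℤ) ∣ (p : ℤ) := fun h =>
    absurd (hpq.symm.eq_one_of_dvd (Int.natCast_dvd_natCast.mp h)) (by omega)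
  convert intervalIntegral_comp_mul_mul_exp_eq_zero hF (by omega) hqp using 3 with φ
  simp only [F, Int.cast_natCast]
  ring

open Complex in
/-- The x- and y-components of the electric field of a uniformly charged
(p,q)-torus knot vanish on the z-axis. -/
theorem torus_knot_field_xy_vanish (p q : ℕ) (hp : 0 < p) (hq : 2 ≤ q)
    (hpq : Nat.Coprime p q) (α : ℝ) :
    ∫ φ in (0:ℝ)..(2 * Real.pi),
      ((Real.cos (q * φ) + 2 : ℝ) : ℂ) * Complex.exp ((p : ℂ) * Complex.I * (φ : ℂ)) *
        ((Real.sqrt ((q : ℝ) ^ 2 + (p : ℝ) ^ 2 * (2 + Real.cos (q * φ)) ^ 2) : ℝ) : ℂ) /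
        (((α ^ 2 + 2 * α * Real.sin (q * φ) + 5 + 4 * Real.cos (q * φ)) ^ ((3:ℝ)/2) : ℝ) : ℂ)
      = 0 :=
  torus_knot_field_xy_vanish_general p q hq hpq α
end

section
/- Let p, q be positive integers. The function α ↦ ∫₀^{2π} √((q^2 + p^2(2+cos u)^2)/(α^2 + 2α sin u + 5 + 4 cos u)) du (the electric potential of the (p,q)-torus knot along the z-axis) attains its maximum over ℝ only at α = 0. -/
open Real intervalIntegral

/-- Key pointwise inequality after symmetrization. -/
lemma torus_key (c s α N : ℝ) (hc : 1 ≤ c) (hcs : 3 * s ^ 2 ≤ c ^ 2) (hN : 0 < N)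
    (hα : α ≠ 0) :
    Real.sqrt (N / (c ^ 2 + (α + s) ^ 2)) + Real.sqrt (N / (c ^ 2 + (α - s) ^ 2)) <
      2 * Real.sqrt (N / (c ^ 2 + s ^ 2)) := by
  have hα2 : 0 < α ^ 2 := by positivity
  have hc0 : (0:ℝ) < c := lt_of_lt_of_le one_pos hc
  have hA : 0 < c ^ 2 + (α + s) ^ 2 := by positivity
  have hB : 0 < c ^ 2 + (α - s) ^ 2 := by positivity
  have hM : 0 < c ^ 2 + s ^ 2 := by positivity
  set A := c ^ 2 + (α + s) ^ 2 with hAdef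
  set B := c ^ 2 + (α - s) ^ 2 with hBdef
  set M := c ^ 2 + s ^ 2 with hMdef
  have hmain : M * (A + B) < 2 * (A * B) := by
    nlinarith [mul_nonneg hα2.le (sub_nonneg.mpr hcs), mul_pos hα2 hα2]
  set a := Real.sqrt A with hadef
  set b := Real.sqrt B with hbdef
  set m := Real.sqrt M with hmdef
  have ha : 0 < a := Real.sqrt_pos.mpr hA
  have hb : 0 < b := Real.sqrt_pos.mpr hB
  have hm : 0 < m := Real.sqrt_pos.mpr hM
  have ha2 : a ^ 2 = A := Real.sq_sqrt hA.le
  have hb2 : b ^ 2 = B := Real.sq_sqrt hB.le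
  have hm2 : m ^ 2 = M := Real.sq_sqrt hM.le
  have h2 : 1 / a + 1 / b < 2 * (1 / m) := by
    rw [div_add_div _ _ ha.ne' hb.ne']
    have h2m : 2 * (1 / m) = 2 / m := by ring
    rw [h2m, one_mul, mul_one, div_lt_div_iff₀ (by positivity) hm]
    have hsq : ((b + a) * m) ^ 2 < (2 * (a * b)) ^ 2 := by
      nlinarith [sq_nonneg (a - b), mul_nonneg hM.le (sq_nonneg (a - b)),
        mul_pos ha hb, mul_pos (mul_pos ha hb) hm]
    have h2ab : 0 ≤ 2 * (a * b) := by positivity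
    exact lt_of_pow_lt_pow_left₀ 2 h2ab hsq
  have hNs : 0 < Real.sqrt N := Real.sqrt_pos.mpr hN
  rw [Real.sqrt_div hN.le, Real.sqrt_div hN.le, Real.sqrt_div hN.le]
  calc Real.sqrt N / a + Real.sqrt N / b = Real.sqrt N * (1 / a + 1 / b) := by ring
    _ < Real.sqrt N * (2 * (1 / m)) := by exact mul_lt_mul_of_pos_left h2 hNs
    _ = 2 * (Real.sqrt N / m) := by ring

/-- The electric potential of the (p,q)-torus knot along the z-axis attains
its maximum over ℝ only at `α = 0`. -/
theorem torus_knot_potential_max_only_at_zero (p q : ℕ) (hp : 0 < p) (hq : 0 < q)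
    (α : ℝ) (hα : α ≠ 0) :
    (∫ u in (0:ℝ)..(2 * Real.pi),
        Real.sqrt (((q : ℝ) ^ 2 + (p : ℝ) ^ 2 * (2 + Real.cos u) ^ 2) /
          (α ^ 2 + 2 * α * Real.sin u + 5 + 4 * Real.cos u))) <
    ∫ u in (0:ℝ)..(2 * Real.pi),
      Real.sqrt (((q : ℝ) ^ 2 + (p : ℝ) ^ 2 * (2 + Real.cos u) ^ 2) /
        ((0:ℝ) ^ 2 + 2 * 0 * Real.sin u + 5 + 4 * Real.cos u)) := by
  set f : ℝ → ℝ → ℝ := fun β u =>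
    Real.sqrt (((q : ℝ) ^ 2 + (p : ℝ) ^ 2 * (2 + Real.cos u) ^ 2) /
      (β ^ 2 + 2 * β * Real.sin u + 5 + 4 * Real.cos u)) with hfdef
  have hdpos : ∀ β u : ℝ, 0 < β ^ 2 + 2 * β * Real.sin u + 5 + 4 * Real.cos u := by
    intro β u
    nlinarith [sq_nonneg (β + Real.sin u), Real.sin_sq_add_cos_sq u,
      Real.neg_one_le_cos u, sq_nonneg (1 + Real.cos u)]
  have hcont : ∀ β, Continuous (f β) := by
    intro β
    apply Continuous.sqrt
    apply Continuous.div
    · continuity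
    · continuity
    · exact fun u => (hdpos β u).ne'
  have hcont' : Continuous (fun u => f α (2 * Real.pi - u)) :=
    (hcont α).comp (by continuity)
  have hint : ∀ β, IntervalIntegrable (f β) MeasureTheory.volume 0 (2 * Real.pi) :=
    fun β => (hcont β).intervalIntegrable _ _
  have hint' : IntervalIntegrable (fun u => f α (2 * Real.pi - u))
      MeasureTheory.volume 0 (2 * Real.pi) := hcont'.intervalIntegrable _ _
  have hpi : (0:ℝ) < 2 * Real.pi := by positivity
  have hflip : (∫ u in (0:ℝ)..(2 * Real.pi), f α (2 * Real.pi - u)) =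
      ∫ u in (0:ℝ)..(2 * Real.pi), f α u := by
    have := intervalIntegral.integral_comp_sub_left (a := (0:ℝ)) (b := 2 * Real.pi)
      (f α) (2 * Real.pi)
    simpa using this
  have hpos : ∀ u : ℝ, 0 < 2 * f 0 u - f α u - f α (2 * Real.pi - u) := by
    intro u
    have hc : (1:ℝ) ≤ 2 + Real.cos u := by nlinarith [Real.neg_one_le_cos u]
    have hcs : 3 * Real.sin u ^ 2 ≤ (2 + Real.cos u) ^ 2 := by
      nlinarith [Real.sin_sq_add_cos_sq u, sq_nonneg (1 + 2 * Real.cos u)]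
    have hN : (0:ℝ) < (q : ℝ) ^ 2 + (p : ℝ) ^ 2 * (2 + Real.cos u) ^ 2 := by
      have : (1:ℝ) ≤ (q : ℝ) := by exact_mod_cast hq
      nlinarith [sq_nonneg ((p:ℝ) * (2 + Real.cos u))]
    have hkey := torus_key (2 + Real.cos u) (Real.sin u) α
      ((q : ℝ) ^ 2 + (p : ℝ) ^ 2 * (2 + Real.cos u) ^ 2) hc hcs hN hα
    have e1 : f α u = Real.sqrt (((q : ℝ) ^ 2 + (p : ℝ) ^ 2 * (2 + Real.cos u) ^ 2) /
        ((2 + Real.cos u) ^ 2 + (α + Real.sin u) ^ 2)) := by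
      simp only [hfdef]
      rw [show α ^ 2 + 2 * α * Real.sin u + 5 + 4 * Real.cos u =
        (2 + Real.cos u) ^ 2 + (α + Real.sin u) ^ 2 from by
          linear_combination -(Real.sin_sq_add_cos_sq u)]
    have e2 : f α (2 * Real.pi - u) =
        Real.sqrt (((q : ℝ) ^ 2 + (p : ℝ) ^ 2 * (2 + Real.cos u) ^ 2) /
        ((2 + Real.cos u) ^ 2 + (α - Real.sin u) ^ 2)) := by
      simp only [hfdef, Real.cos_two_pi_sub, Real.sin_two_pi_sub]
      rw [show α ^ 2 + 2 * α * -Real.sin u + 5 + 4 * Real.cos u =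
        (2 + Real.cos u) ^ 2 + (α - Real.sin u) ^ 2 from by
          linear_combination -(Real.sin_sq_add_cos_sq u)]
    have e3 : f 0 u = Real.sqrt (((q : ℝ) ^ 2 + (p : ℝ) ^ 2 * (2 + Real.cos u) ^ 2) /
        ((2 + Real.cos u) ^ 2 + Real.sin u ^ 2)) := by
      simp only [hfdef]
      rw [show (0:ℝ) ^ 2 + 2 * 0 * Real.sin u + 5 + 4 * Real.cos u =
        (2 + Real.cos u) ^ 2 + Real.sin u ^ 2 from by
          linear_combination -(Real.sin_sq_add_cos_sq u)]
    rw [e1, e2, e3]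
    linarith
  have hdiff : IntervalIntegrable
      (fun u => 2 * f 0 u - f α u - f α (2 * Real.pi - u))
      MeasureTheory.volume 0 (2 * Real.pi) :=
    (((hint 0).const_mul 2).sub (hint α)).sub hint'
  have hI : 0 < ∫ u in (0:ℝ)..(2 * Real.pi),
      (2 * f 0 u - f α u - f α (2 * Real.pi - u)) :=
    intervalIntegral.intervalIntegral_pos_of_pos hdiff hpos hpi
  rw [intervalIntegral.integral_sub (((hint 0).const_mul 2).sub (hint α)) hint',
    intervalIntegral.integral_sub ((hint 0).const_mul 2) (hint α),
    intervalIntegral.integral_const_mul, hflip] at hI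
  show (∫ u in (0:ℝ)..(2 * Real.pi), f α u) < ∫ u in (0:ℝ)..(2 * Real.pi), f 0 u
  linarith
end

section
/- Let p, q be positive integers. The gradient of the electric potential of the (p,q)-torus knot along the z-axis, given by α ↦ ∫₀^{2π} (α + sin u) √(q^2 + p^2(2+cos u)^2) / (α^2 + 2α sin u + 5 + 4 cos u)^{3/2} du, vanishes only at α = 0. -/
lemma key_alg (D x z s2 : ℝ) (hz : 0 ≤ z) (hxz : z < x) (hs2 : 0 ≤ s2)
    (h1 : x * z ≤ s2) (h2 : x^2 + z^2 ≤ 4 * s2) (h3 : 3 * s2 ≤ D) (hD : 0 < D) :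
    z^2 * (x^2 + D)^3 < x^2 * (z^2 + D)^3 := by
  have hx : 0 < x := lt_of_le_of_lt hz hxz
  have hxz0 : 0 ≤ x * z := mul_nonneg hx.le hz
  have hb1 : x^2 * z^2 * (x^2 + z^2) ≤ 4 * s2^3 := by nlinarith [mul_le_mul h1 h1 hxz0 hs2]
  have hb2 : 3 * (x^2 * z^2) * D ≤ 3 * s2^2 * D := by nlinarith [mul_le_mul h1 h1 hxz0 hs2]
  have h13 : s2 ≤ D/3 := by linarith
  have hs2D : s2^3 ≤ (D/3)^3 := pow_le_pow_left₀ hs2 h13 3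
  have hs2sq : s2^2 * D ≤ (D/3)^2 * D :=
    mul_le_mul_of_nonneg_right (pow_le_pow_left₀ hs2 h13 2) hD.le
  have hD3 : 0 < D^3 := pow_pos hD 3
  have hmain : x^2 * z^2 * (x^2 + z^2) + 3 * (x^2 * z^2) * D < D^3 := by nlinarith
  have hxz2 : 0 < x^2 - z^2 := by nlinarith
  nlinarith [mul_pos hxz2 (show 0 < D^3 - (x^2 * z^2 * (x^2 + z^2) + 3 * (x^2 * z^2) * D) by linarith)]


lemma rpow32 (A : ℝ) (hA : 0 ≤ A) : A ^ ((3:ℝ)/2) = Real.sqrt (A^3) := by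
  rw [show ((3:ℝ)/2) = (3:ℝ) * (1/2) by norm_num, Real.rpow_mul hA,
    show (3:ℝ) = ((3:ℕ):ℝ) by norm_num, Real.rpow_natCast, Real.sqrt_eq_rpow]

lemma half (D x z s2 : ℝ) (hz : 0 ≤ z) (hxz : z < x) (hs2 : 0 ≤ s2)
    (h1 : x * z ≤ s2) (h2 : x^2 + z^2 ≤ 4 * s2) (h3 : 3 * s2 ≤ D) (hD : 0 < D) :
    z / ((z^2 + D) ^ ((3:ℝ)/2)) < x / ((x^2 + D) ^ ((3:ℝ)/2)) := by
  have hx : 0 < x := lt_of_le_of_lt hz hxz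
  have hA : (0:ℝ) < x^2 + D := by positivity
  have hB : (0:ℝ) < z^2 + D := by positivity
  rw [rpow32 _ hA.le, rpow32 _ hB.le]
  have hA3 : (0:ℝ) < (x^2+D)^3 := by positivity
  have hB3 : (0:ℝ) < (z^2+D)^3 := by positivity
  have hsA : 0 < Real.sqrt ((x^2+D)^3) := Real.sqrt_pos.2 hA3
  have hsB : 0 < Real.sqrt ((z^2+D)^3) := Real.sqrt_pos.2 hB3
  rw [div_lt_div_iff₀ hsB hsA]
  have key := key_alg D x z s2 hz hxz hs2 h1 h2 h3 hD
  have hsq : (z * Real.sqrt ((x^2+D)^3))^2 < (x * Real.sqrt ((z^2+D)^3))^2 := by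
    rw [mul_pow, mul_pow, Real.sq_sqrt hA3.le, Real.sq_sqrt hB3.le]
    exact key
  exact lt_of_pow_lt_pow_left₀ 2 (by positivity) hsq

lemma pointwise (α s c R : ℝ) (hα : 0 < α) (h1 : s^2 + c^2 = 1) (hR : 0 < R) :
    0 < (α + s) * R / ((α^2 + 2*α*s + 5 + 4*c) ^ ((3:ℝ)/2))
      + (α + -s) * R / ((α^2 + 2*α*(-s) + 5 + 4*c) ^ ((3:ℝ)/2)) := by
  have hc1 : -1 ≤ c := by nlinarith [sq_nonneg s]
  have hD : (0:ℝ) < (2+c)^2 := by nlinarith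
  have hdenA : α^2 + 2*α*s + 5 + 4*c = (α+s)^2 + (2+c)^2 := by linear_combination -h1
  have hdenB : α^2 + 2*α*(-s) + 5 + 4*c = (α-s)^2 + (2+c)^2 := by linear_combination -h1
  rw [hdenA, hdenB]
  have h3s : 3 * s^2 ≤ (2+c)^2 := by nlinarith [sq_nonneg (1+2*c)]
  have hApos : (0:ℝ) < (α+s)^2 + (2+c)^2 := by positivity
  have hBpos : (0:ℝ) < (α-s)^2 + (2+c)^2 := by positivity
  have hA32 : (0:ℝ) < ((α+s)^2 + (2+c)^2) ^ ((3:ℝ)/2) := Real.rpow_pos_of_pos hApos _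
  have hB32 : (0:ℝ) < ((α-s)^2 + (2+c)^2) ^ ((3:ℝ)/2) := Real.rpow_pos_of_pos hBpos _
  rcases le_or_gt s α with hsle | hslt
  · rcases le_or_gt (-α) s with hge | hlt
    · -- both α+s ≥ 0 and α−s ≥ 0
      rcases lt_or_ge 0 (α + s) with hpos | hnp
      · have t1 : 0 < (α + s) * R / (((α+s)^2 + (2+c)^2) ^ ((3:ℝ)/2)) := by positivity
        have t2 : 0 ≤ (α + -s) * R / (((α-s)^2 + (2+c)^2) ^ ((3:ℝ)/2)) := by
          apply div_nonneg (mul_nonneg (by linarith) hR.le) hB32.le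
        linarith
      · have hs : α + -s = 2*α := by linarith [le_antisymm hnp (by linarith : 0 ≤ α + s)]
        have hs0 : α + s = 0 := le_antisymm hnp (by linarith)
        rw [hs0, hs]
        have : 0 < 2*α * R / (((α-s)^2 + (2+c)^2) ^ ((3:ℝ)/2)) := by positivity
        simp only [zero_mul, zero_div, zero_add]
        exact this
    · -- s < -α : x = α - s > 0, z = -(α+s) ≥ 0
      have hkey := half ((2+c)^2) (α - s) (-(α+s)) (s^2)
        (by linarith) (by linarith) (sq_nonneg s)
        (by nlinarith) (by nlinarith) h3s hD
      have hzz : (-(α+s))^2 = (α+s)^2 := by ring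
      rw [hzz] at hkey
      rw [neg_div] at hkey
      have hsum : 0 < (α+s) / (((α+s)^2 + (2+c)^2) ^ ((3:ℝ)/2))
          + (α-s) / (((α-s)^2 + (2+c)^2) ^ ((3:ℝ)/2)) := by linarith
      have heq : (α + s) * R / (((α+s)^2 + (2+c)^2) ^ ((3:ℝ)/2))
          + (α + -s) * R / (((α-s)^2 + (2+c)^2) ^ ((3:ℝ)/2))
          = R * ((α+s) / (((α+s)^2 + (2+c)^2) ^ ((3:ℝ)/2))
          + (α-s) / (((α-s)^2 + (2+c)^2) ^ ((3:ℝ)/2))) := by ring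
      rw [heq]
      exact mul_pos hR hsum
  · -- α < s : x = α + s, z = s - α
    have hkey := half ((2+c)^2) (α + s) (s - α) (s^2)
      (by linarith) (by linarith) (sq_nonneg s)
      (by nlinarith) (by nlinarith) h3s hD
    rw [show (s-α)^2 = (α-s)^2 by ring] at hkey
    have hsum : 0 < (α+s) / (((α+s)^2 + (2+c)^2) ^ ((3:ℝ)/2))
        + (α-s) / (((α-s)^2 + (2+c)^2) ^ ((3:ℝ)/2)) := by
      have : (α-s) / (((α-s)^2 + (2+c)^2) ^ ((3:ℝ)/2))
          = -((s-α) / (((α-s)^2 + (2+c)^2) ^ ((3:ℝ)/2))) := by ring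
      rw [this]
      linarith
    have heq : (α + s) * R / (((α+s)^2 + (2+c)^2) ^ ((3:ℝ)/2))
        + (α + -s) * R / (((α-s)^2 + (2+c)^2) ^ ((3:ℝ)/2))
        = R * ((α+s) / (((α+s)^2 + (2+c)^2) ^ ((3:ℝ)/2))
        + (α-s) / (((α-s)^2 + (2+c)^2) ^ ((3:ℝ)/2))) := by ring
    rw [heq]
    exact mul_pos hR hsum


noncomputable def tkF (p q : ℕ) (α : ℝ) (u : ℝ) : ℝ :=
  (α + Real.sin u) * Real.sqrt ((q : ℝ) ^ 2 + (p : ℝ) ^ 2 * (2 + Real.cos u) ^ 2) /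
    (α ^ 2 + 2 * α * Real.sin u + 5 + 4 * Real.cos u) ^ ((3:ℝ)/2)

lemma den_pos (α u : ℝ) : 0 < α ^ 2 + 2 * α * Real.sin u + 5 + 4 * Real.cos u := by
  nlinarith [Real.sin_sq_add_cos_sq u, Real.neg_one_le_cos u, sq_nonneg (α + Real.sin u),
    sq_nonneg (1 + Real.cos u)]

lemma tkF_cont (p q : ℕ) (α : ℝ) : Continuous (tkF p q α) := by
  apply Continuous.div
  · exact (continuous_const.add Real.continuous_sin).mul
      (Real.continuous_sqrt.comp (by continuity))
  · exact Continuous.rpow_const (by continuity) (fun x => Or.inr (by norm_num))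
  · intro x
    exact (Real.rpow_pos_of_pos (den_pos α x) _).ne'

lemma tkF_int (p q : ℕ) (α : ℝ) :
    IntervalIntegrable (tkF p q α) MeasureTheory.volume 0 (2 * Real.pi) :=
  (tkF_cont p q α).intervalIntegrable _ _

lemma tk_sym (p q : ℕ) (α : ℝ) :
    (∫ u in (0:ℝ)..(2 * Real.pi), tkF p q α (2 * Real.pi - u)) =
      ∫ u in (0:ℝ)..(2 * Real.pi), tkF p q α u := by
  simpa using intervalIntegral.integral_comp_sub_left (tkF p q α) (2 * Real.pi)

lemma tk_neg (p q : ℕ) (α : ℝ) :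
    (∫ u in (0:ℝ)..(2 * Real.pi), tkF p q (-α) u) =
      -∫ u in (0:ℝ)..(2 * Real.pi), tkF p q α u := by
  rw [← tk_sym p q (-α)]
  have hpt : ∀ u, tkF p q (-α) (2 * Real.pi - u) = -(tkF p q α u) := by
    intro u
    unfold tkF
    rw [Real.sin_two_pi_sub, Real.cos_two_pi_sub]
    rw [show (-α) ^ 2 + 2 * (-α) * (-Real.sin u) + 5 + 4 * Real.cos u =
      α ^ 2 + 2 * α * Real.sin u + 5 + 4 * Real.cos u by ring]
    ring
  simp only [hpt]
  exact intervalIntegral.integral_neg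


lemma tk_pos (p q : ℕ) (hq : 0 < q) (α : ℝ) (hα : 0 < α) :
    0 < ∫ u in (0:ℝ)..(2 * Real.pi), tkF p q α u := by
  have hint1 : IntervalIntegrable (tkF p q α) MeasureTheory.volume 0 (2 * Real.pi) :=
    (tkF_cont p q α).intervalIntegrable _ _
  have hint2 : IntervalIntegrable (fun u => tkF p q α (2 * Real.pi - u))
      MeasureTheory.volume 0 (2 * Real.pi) :=
    ((tkF_cont p q α).comp (by continuity)).intervalIntegrable _ _
  have hadd : (∫ u in (0:ℝ)..(2 * Real.pi), (tkF p q α u + tkF p q α (2 * Real.pi - u)))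
      = (∫ u in (0:ℝ)..(2 * Real.pi), tkF p q α u)
        + ∫ u in (0:ℝ)..(2 * Real.pi), tkF p q α u := by
    rw [intervalIntegral.integral_add hint1 hint2, tk_sym]
  have hpos : ∀ u : ℝ, 0 < tkF p q α u + tkF p q α (2 * Real.pi - u) := by
    intro u
    have hq' : (0:ℝ) < (q:ℝ) := by exact_mod_cast hq
    have hR : 0 < Real.sqrt ((q : ℝ) ^ 2 + (p : ℝ) ^ 2 * (2 + Real.cos u) ^ 2) :=
      Real.sqrt_pos.2 (by positivity)
    have h2 : tkF p q α (2 * Real.pi - u) =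
        (α + -Real.sin u) * Real.sqrt ((q : ℝ) ^ 2 + (p : ℝ) ^ 2 * (2 + Real.cos u) ^ 2) /
          (α ^ 2 + 2 * α * (-Real.sin u) + 5 + 4 * Real.cos u) ^ ((3:ℝ)/2) := by
      unfold tkF
      rw [Real.sin_two_pi_sub, Real.cos_two_pi_sub]
    rw [h2]
    exact pointwise α (Real.sin u) (Real.cos u) _ hα (Real.sin_sq_add_cos_sq u) hR
  have h2pi : (0:ℝ) < 2 * Real.pi := by positivity
  have := intervalIntegral.intervalIntegral_pos_of_pos_on (hint1.add hint2)
    (fun x _ => hpos x) h2pi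
  rw [hadd] at this
  linarith

/-- The gradient of the z-axis electric potential of the (p,q)-torus knot
vanishes only at `α = 0`. -/
theorem torus_knot_field_z_vanishes_only_at_zero (p q : ℕ) (hp : 0 < p) (hq : 0 < q)
    (α : ℝ) :
    (∫ u in (0:ℝ)..(2 * Real.pi),
        (α + Real.sin u) * Real.sqrt ((q : ℝ) ^ 2 + (p : ℝ) ^ 2 * (2 + Real.cos u) ^ 2) /
          (α ^ 2 + 2 * α * Real.sin u + 5 + 4 * Real.cos u) ^ ((3:ℝ)/2)) = 0 ↔ α = 0 := by
  show (∫ u in (0:ℝ)..(2 * Real.pi), tkF p q α u) = 0 ↔ α = 0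
  constructor
  · intro h
    by_contra hne
    rcases (lt_or_gt_of_ne hne) with hneg | hpos
    · have h1 := tk_neg p q (-α)
      rw [neg_neg] at h1
      have h2 := tk_pos p q hq (-α) (by linarith)
      rw [h] at h1
      linarith
    · exact (tk_pos p q hq α hpos).ne' h
  · intro h
    subst h
    have h1 := tk_neg p q 0
    rw [neg_zero] at h1
    linarith
end

section
/- Fix real numbers m, n with 0 ≤ m ≤ 2 and n ≥ 1 satisfying 4n - 3m^2 > 0 (in particular when m = 2 sin u and n = 5 + 4 cos u for some u). Define g(α) = 1/√(α^2 + mα + n) + 1/√(α^2 - mα + n). Then g attains its maximum over ℝ only at α = 0. -/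
theorem g_aux_div (n A B q : ℝ) (hn0 : 0 < n) (hA : 0 < A) (hB : 0 < B) (hq : 0 < q)
    (hq2 : q ^ 2 = A * B) (h3 : 2 * n * q < 4 * (A * B) - n * (A + B)) :
    1 / A + 1 / B + 2 / q < 4 / n := by
  rw [div_add_div _ _ hA.ne' hB.ne', div_add_div _ _ (mul_pos hA hB).ne' hq.ne',
    div_lt_div_iff₀ (by positivity) hn0]
  nlinarith [mul_lt_mul_of_pos_left h3 hq, hq2]

theorem g_aux_sq (x y : ℝ) (hx : 0 < x) (hy : 0 < y) :
    (1 / x + 1 / y) ^ 2 = 1 / x ^ 2 + 1 / y ^ 2 + 2 / (x * y) := by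
  field_simp
  ring

/-- For `0 ≤ m ≤ 2`, `n ≥ 1` with `4n - 3m² > 0`, the function
`g(α) = 1/√(α²+mα+n) + 1/√(α²-mα+n)` attains its maximum only at `α = 0`. -/
theorem g_max_only_at_zero (m n : ℝ) (hm0 : 0 ≤ m) (hm2 : m ≤ 2) (hn : 1 ≤ n)
    (hpos : 0 < 4 * n - 3 * m ^ 2) (α : ℝ) (hα : α ≠ 0) :
    1 / Real.sqrt (α ^ 2 + m * α + n) + 1 / Real.sqrt (α ^ 2 - m * α + n) <
      1 / Real.sqrt ((0:ℝ) ^ 2 + m * 0 + n) + 1 / Real.sqrt ((0:ℝ) ^ 2 - m * 0 + n) := by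
  have hn0 : (0:ℝ) < n := lt_of_lt_of_le one_pos hn
  have h0 : (0:ℝ) ^ 2 + m * 0 + n = n := by ring
  have h0' : (0:ℝ) ^ 2 - m * 0 + n = n := by ring
  rw [h0, h0']
  set A := α ^ 2 + m * α + n with hAdef
  set B := α ^ 2 - m * α + n with hBdef
  have hα2 : 0 < α ^ 2 := by positivity
  have hA : 0 < A := by nlinarith [sq_nonneg (2*α + m), sq_nonneg m]
  have hB : 0 < B := by nlinarith [sq_nonneg (2*α - m), sq_nonneg m]
  set sA := Real.sqrt A with hsAdef
  set sB := Real.sqrt B with hsBdef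
  set sn := Real.sqrt n with hsndef
  have hsA : 0 < sA := Real.sqrt_pos.mpr hA
  have hsB : 0 < sB := Real.sqrt_pos.mpr hB
  have hsn : 0 < sn := Real.sqrt_pos.mpr hn0
  have hsA2 : sA ^ 2 = A := Real.sq_sqrt hA.le
  have hsB2 : sB ^ 2 = B := Real.sq_sqrt hB.le
  have hsn2 : sn ^ 2 = n := Real.sq_sqrt hn0.le
  set q := sA * sB with hqdef
  have hq : 0 < q := mul_pos hsA hsB
  have hq2 : q ^ 2 = A * B := by rw [hqdef, mul_pow, hsA2, hsB2]
  clear_value q sA sB sn A B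
  -- key polynomial facts
  have h1 : 0 < 4 * (A * B) - n * (A + B) := by
    nlinarith [mul_pos hα2 hα2, mul_pos hpos hα2, mul_pos hn0 hn0, sq_nonneg m,
      mul_nonneg (sq_nonneg m) hα2.le]
  have h2 : 4 * n ^ 2 * (A * B) < (4 * (A * B) - n * (A + B)) ^ 2 := by
    have expand : (4 * (A * B) - n * (A + B)) ^ 2 - 4 * n ^ 2 * (A * B) =
        16 * (α ^ 2) ^ 4 + (48 * n - 32 * m ^ 2) * (α ^ 2) ^ 3
          + ((6 * n - 4 * m ^ 2) ^ 2 + 12 * n ^ 2) * (α ^ 2) ^ 2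
          + 4 * (4 * n - 3 * m ^ 2) * n ^ 2 * α ^ 2 := by
      rw [hAdef, hBdef]; ring
    have t1 : 0 < 16 * (α ^ 2) ^ 4 := by positivity
    have t2 : 0 ≤ (48 * n - 32 * m ^ 2) * (α ^ 2) ^ 3 := by
      apply mul_nonneg _ (by positivity)
      nlinarith [sq_nonneg m]
    have t3 : 0 ≤ ((6 * n - 4 * m ^ 2) ^ 2 + 12 * n ^ 2) * (α ^ 2) ^ 2 := by positivity
    have t4 : 0 < 4 * (4 * n - 3 * m ^ 2) * n ^ 2 * α ^ 2 := by positivity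
    linarith [expand, t1, t2, t3, t4]
  have h3 : 2 * n * q < 4 * (A * B) - n * (A + B) := by
    have hsq : (2 * n * q) ^ 2 < (4 * (A * B) - n * (A + B)) ^ 2 := by
      calc (2 * n * q) ^ 2 = 4 * n ^ 2 * q ^ 2 := by ring
        _ = 4 * n ^ 2 * (A * B) := by rw [hq2]
        _ < _ := h2
    exact lt_of_pow_lt_pow_left₀ 2 h1.le hsq
  have key : 1 / A + 1 / B + 2 / q < 4 / n := g_aux_div n A B q hn0 hA hB hq hq2 h3
  have hL : (0:ℝ) ≤ 1 / sn + 1 / sn := by positivity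
  apply lt_of_pow_lt_pow_left₀ 2 hL
  rw [g_aux_sq sA sB hsA hsB, g_aux_sq sn sn hsn hsn, hsA2, hsB2, hsn2, ← hqdef]
  have hsnn : sn * sn = n := by rw [← hsn2]; ring
  rw [hsnn]
  calc 1 / A + 1 / B + 2 / q < 4 / n := key
    _ = 1 / n + 1 / n + 2 / n := by ring
end

section
/- Let m = 2 sin u, n = 5 + 4 cos u for u ∈ [0, π], and define Q(α) = -8α^3 + α^2(5m^2 - 12n) + α(6m^2 n - m^4) + 4n^3 - 3m^2 n^2. Then Q has no root in the interval [0, m/2]. -/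
private lemma f_pos (c : ℝ) (hc1 : c ≤ 1) (hc2 : -1 ≤ c) :
    4 * (5 + 4 * c) ^ 2 * (3 * c ^ 2 + 4 * c + 2) -
      (1 - c ^ 2) * (20 * c ^ 2 + 48 * c + 48) > 0 := by
  nlinarith [sq_nonneg (2*c+1), sq_nonneg (c+1), sq_nonneg ((c+1)^2), sq_nonneg (c^2+c),
    mul_nonneg (sq_nonneg (2*c+1)) (by linarith : (0:ℝ) ≤ 1 - c),
    mul_nonneg (sq_nonneg (2*c+1)) (by linarith : (0:ℝ) ≤ 1 + c),
    mul_nonneg (sq_nonneg (c+1)) (by linarith : (0:ℝ) ≤ 1 - c),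
    mul_nonneg (mul_nonneg (by linarith : (0:ℝ) ≤ 1 + c)
      (by linarith : (0:ℝ) ≤ 1 + c)) (by linarith : (0:ℝ) ≤ 1 - c)]


/-- With `m = 2 sin u`, `n = 5 + 4 cos u` for `u ∈ [0,π]`, the cubic `Q` has no
root in `[0, m/2]`. -/
theorem Q_no_root (u : ℝ) (hu : u ∈ Set.Icc 0 Real.pi) (α : ℝ)
    (hα : α ∈ Set.Icc 0 (2 * Real.sin u / 2)) :
    (fun m n : ℝ => -8 * α ^ 3 + α ^ 2 * (5 * m ^ 2 - 12 * n) +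
        α * (6 * m ^ 2 * n - m ^ 4) + 4 * n ^ 3 - 3 * m ^ 2 * n ^ 2)
      (2 * Real.sin u) (5 + 4 * Real.cos u) ≠ 0 := by
  obtain ⟨h0, h1⟩ := hα
  have hs : Real.sin u ≥ 0 := Real.sin_nonneg_of_mem_Icc hu
  have hc1 : Real.cos u ≤ 1 := Real.cos_le_one u
  have hc2 : -1 ≤ Real.cos u := Real.neg_one_le_cos u
  have hsq : Real.sin u ^ 2 = 1 - Real.cos u ^ 2 := Real.sin_sq u
  have hα1 : α ≤ Real.sin u := by linarith
  simp only
  set s := Real.sin u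
  set c := Real.cos u
  have h4 : s ^ 4 = (1 - c ^ 2) ^ 2 := by rw [show s ^ 4 = (s ^ 2) ^ 2 by ring, hsq]
  have ha2 : α ^ 2 ≤ 1 - c ^ 2 := by nlinarith
  have haa : α ≤ 1 := by nlinarith [sq_nonneg (α - 1), sq_nonneg c]
  have h3 : α ^ 3 ≤ α ^ 2 := by nlinarith
  have hpos : α * ((1 - c ^ 2) * (2 * c ^ 2 + 12 * c + 13)) ≥ 0 := by
    apply mul_nonneg h0
    nlinarith [sq_nonneg (c + 1), sq_nonneg (c - 1), sq_nonneg c]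
  have hpos2 : (1 - c ^ 2 - α ^ 2) * (20 * c ^ 2 + 48 * c + 48) ≥ 0 := by
    apply mul_nonneg (by linarith)
    nlinarith [sq_nonneg (c + 1), sq_nonneg c]
  have hf := f_pos c hc1 hc2
  have heq : -8 * α ^ 3 + α ^ 2 * (5 * (2*s) ^ 2 - 12 * (5+4*c)) +
        α * (6 * (2*s) ^ 2 * (5+4*c) - (2*s) ^ 4) + 4 * (5+4*c) ^ 3 - 3 * (2*s) ^ 2 * (5+4*c) ^ 2
      = -8 * (α ^ 3 - α ^ 2) + 8 * (α * ((1 - c ^ 2) * (2 * c ^ 2 + 12 * c + 13)))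
        + (1 - c ^ 2 - α ^ 2) * (20 * c ^ 2 + 48 * c + 48)
        + (4 * (5 + 4 * c) ^ 2 * (3 * c ^ 2 + 4 * c + 2)
            - (1 - c ^ 2) * (20 * c ^ 2 + 48 * c + 48)) := by
    linear_combination (20 * α ^ 2 + 24 * α * (5 + 4 * c) - 12 * (5 + 4 * c) ^ 2) * hsq
      + (-16 * α) * h4
  intro hcon
  rw [heq] at hcon
  linarith
end
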